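/- Let $(E,\mathcal{F})$ be a matroid on a finite ground set $E$ whose bases all have size $M$, let $k \ge 1$, and let $f : (k+1)^E \to \mathbb{R}$ be a monotone $k$-submodular function. Let $\mathbf{s}^{(0)} = \mathbf{0}, \mathbf{s}^{(1)}, \dots, \mathbf{s}^{(M)}$ be any sequence in $(k+1)^E$ such that for each $j \in \{1,\dots,M\}$ there exist $e^{(j)} \notin \mathrm{supp}(\mathbf{s}^{(j-1)})$ with $\mathrm{supp}(\mathbf{s}^{(j-1)}) \cup \{e^{(j)}\} \in \mathcal{F}$ and $i^{(j)} \in \{1,\dots,k\}$ with $\mathbf{s}^{(j)}$ equal to $\mathbf{s}^{(j-1)}$ except that $\mathbf{s}^{(j)}(e^{(j)}) = i^{(j)}$. Let $\mathbf{o} \in (k+1)^E$ be any vector with $\mathrm{supp}(\mathbf{o})$ a basis of the matroid. Then there exists a sequence $\mathbf{o}^{(0)} = \mathbf{o}, \mathbf{o}^{(1)}, \dots, \mathbf{o}^{(M)} = \mathbf{s}^{(M)}$ in $(k+1)^E$ such that $\mathbf{s}^{(j)} \prec \mathbf{o}^{(j)}$ for $j = 0, 1, \dots, M-1$, $\mathrm{supp}(\mathbf{o}^{(j)})$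 is a basis of the matroid for every $j = 0, 1, \dots, M$, and for each $j \in \{1,\dots,M\}$ there exists $o^{(j)} \in \mathrm{supp}(\mathbf{o}^{(j-1)}) \setminus \mathrm{supp}(\mathbf{s}^{(j-1)})$ such that $\mathbf{o}^{(j)}$ is obtained from $\mathbf{o}^{(j-1)}$ by setting the coordinate $o^{(j)}$ to $0$ and then setting the coordinate $e^{(j)}$ to $i^{(j)}$. -/

import Mathlib

open Finset

section KSubmodularDefs

variable {E : Type*} [Fintype E] [DecidableEq E] {k : ℕ}

/-- The support of a vector `x ∈ (k+1)^E`, i.e. the set of coordinates with nonzero value. -/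
def supp (x : E → Fin (k + 1)) : Finset E :=
  Finset.univ.filter (fun e => x e ≠ 0)

/-- The partial order `x ⪯ y`, i.e. `X i ⊆ Y i` for every `i ∈ {1, …, k}`. -/
def kLe (x y : E → Fin (k + 1)) : Prop :=
  ∀ e, x e ≠ 0 → y e = x e

/-- The strict partial order `x ≺ y`. -/
def kLt (x y : E → Fin (k + 1)) : Prop :=
  kLe x y ∧ x ≠ y

/-- The meet `x ⊓ y`, whose `i`-th component is `X i ∩ Y i`. -/
def kInf (x y : E → Fin (k + 1)) : E → Fin (k + 1) :=
  fun e => if x e = y e then x e else 0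

/-- The join `x ⊔ y`, whose `i`-th component is `(X i ∪ Y i) \ ⋃_{j ≠ i} (X j ∪ Y j)`. -/
def kSup (x y : E → Fin (k + 1)) : E → Fin (k + 1) :=
  fun e =>
    if x e = 0 then y e
    else if y e = 0 then x e
    else if x e = y e then x e else 0

/-- `f : (k+1)^E → ℝ` is `k`-submodular. -/
def KSubmodular (f : (E → Fin (k + 1)) → ℝ) : Prop :=
  ∀ x y, f x + f y ≥ f (kSup x y) + f (kInf x y)

/-- `f : (k+1)^E → ℝ` is monotone w.r.t. the partial order `⪯`. -/
def KMonotone (f : (E → Fin (k + 1)) → ℝ) : Prop :=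
  ∀ x y, kLe x y → f x ≤ f y

/-- The marginal gain `Δ_{e,i} f(x) = f(x with coordinate e set to i) - f(x)`. -/
def marg (f : (E → Fin (k + 1)) → ℝ) (e : E) (i : Fin (k + 1))
    (x : E → Fin (k + 1)) : ℝ :=
  f (Function.update x e i) - f x

/-- Matroid axioms (M1)–(M3) for a family `F` of subsets of `E`. -/
structure IsMatroid (F : Finset E → Prop) : Prop where
  empty : F ∅
  subset : ∀ ⦃A B : Finset E⦄, A ⊆ B → F B → F A
  exchange : ∀ ⦃A B : Finset E⦄, F A → F B → A.card < B.card →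
    ∃ e ∈ B \ A, F (insert e A)

/-- A basis of the matroid: a maximal independent set. -/
def IsBasis (F : Finset E → Prop) (B : Finset E) : Prop :=
  F B ∧ ∀ B', F B' → B ⊆ B' → B' = B

end KSubmodularDefs

/-!
The sequence is built one step at a time, keeping `s⁽ʲ⁾ ⪯ o⁽ʲ⁾` with `supp o⁽ʲ⁾` a basis.
Since `supp s⁽ʲ⁾ ⊆ supp o⁽ʲ⁾` and `supp s⁽ʲ⁾ + e⁽ʲ⁺¹⁾` is independent, the basis exchange property
gives some `b ∈ supp o⁽ʲ⁾ \ supp s⁽ʲ⁾` whose removal, followed by the insertion of `e⁽ʲ⁺¹⁾`,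
yields again a basis. As `|supp s⁽ʲ⁾| = j < M = |supp o⁽ʲ⁾|` the relation is strict for `j < M`,
and for `j = M` the supports coincide, which forces `o⁽ᴹ⁾ = s⁽ᴹ⁾`.
-/

section Matroid

variable {E : Type*} [DecidableEq E] {F : Finset E → Prop}

namespace IsMatroid

theorem card_le_of_isBasis (hF : IsMatroid F) {A B : Finset E} (hB : IsBasis F B) (hA : F A) :
    A.card ≤ B.card := by
  by_contra! hlt
  obtain ⟨x, hx, hxB⟩ := hF.exchange hB.1 hA hlt
  have hmax : insert x B = B := hB.2 _ hxB (subset_insert x B)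
  exact (mem_sdiff.mp hx).2 (hmax ▸ mem_insert_self x B)

theorem isBasis_of_card_le (hF : IsMatroid F) {A B : Finset E} (hB : IsBasis F B) (hA : F A)
    (hcard : B.card ≤ A.card) : IsBasis F A :=
  ⟨hA, fun _ hA' hAA' =>
    (eq_of_subset_of_card_le hAA' (hcard.trans' (hF.card_le_of_isBasis hB hA'))).symm⟩

theorem exists_superset_subset_union (hF : IsMatroid F) {A B : Finset E} (hA : F A) (hB : F B)
    (hcard : A.card ≤ B.card) : ∃ C, F C ∧ A ⊆ C ∧ C ⊆ A ∪ B ∧ C.card = B.card := by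
  induction h : B.card - A.card generalizing A with
  | zero => exact ⟨A, hA, Subset.refl A, subset_union_left, by omega⟩
  | succ d ih =>
    obtain ⟨x, hx, hxA⟩ := hF.exchange hA hB (by omega)
    obtain ⟨hxB, hxA'⟩ := mem_sdiff.mp hx
    obtain ⟨C, hC, hAC, hCsub, hCcard⟩ :=
      ih hxA (by rw [card_insert_of_notMem hxA']; omega) (by rw [card_insert_of_notMem hxA']; omega)
    refine ⟨C, hC, (subset_insert x A).trans hAC, hCsub.trans ?_, hCcard⟩
    rw [insert_union]
    exact insert_subset (mem_union_right A hxB) (Subset.refl _)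

theorem exists_isBasis_insert_erase (hF : IsMatroid F) {B S : Finset E} {a : E}
    (hB : IsBasis F B) (hSB : S ⊆ B) (ha : a ∉ S) (hI : F (insert a S)) :
    ∃ b ∈ B \ S, IsBasis F (insert a (B.erase b)) := by
  by_cases haB : a ∈ B
  · exact ⟨a, mem_sdiff.mpr ⟨haB, ha⟩, by rwa [insert_erase haB]⟩
  have hcard : (insert a S).card ≤ B.card := hF.card_le_of_isBasis hB hI
  obtain ⟨C, hC, hSC, hCsub, hCcard⟩ := hF.exists_superset_subset_union hI hB.1 hcard
  have haC : a ∈ C := hSC (mem_insert_self a S)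
  obtain ⟨b, hbB, hbC⟩ : ∃ b ∈ B, b ∉ C := by
    by_contra! hBC
    exact haB (eq_of_subset_of_card_le hBC hCcard.le ▸ haC)
  have hbS : b ∉ S := fun hbS => hbC (hSC (mem_insert_of_mem hbS))
  have hC_eq : C = insert a (B.erase b) := by
    refine eq_of_subset_of_card_le (fun c hc => ?_) ?_
    · have hc' := hCsub hc
      rw [union_comm, union_insert, union_eq_left.mpr hSB] at hc'
      rcases mem_insert.mp hc' with rfl | hcB
      · exact mem_insert_self c _
      · exact mem_insert_of_mem (mem_erase.mpr ⟨fun h => hbC (h ▸ hc), hcB⟩)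
    · rw [hCcard]
      calc (insert a (B.erase b)).card ≤ (B.erase b).card + 1 := card_insert_le a _
        _ = B.card := card_erase_add_one hbB
  exact ⟨b, mem_sdiff.mpr ⟨hbB, hbS⟩, hC_eq ▸ hF.isBasis_of_card_le hB hC hCcard.ge⟩

end IsMatroid

end Matroid

section Support

variable {E : Type*} [Fintype E] {k : ℕ} {x y : E → Fin (k + 1)}

theorem mem_supp {a : E} : a ∈ supp x ↔ x a ≠ 0 := by
  simp [supp]

theorem kLe.kLt_of_card_supp_lt (h : kLe x y) (hcard : (supp x).card < (supp y).card) :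
    kLt x y :=
  ⟨h, fun hxy => hcard.ne (hxy ▸ rfl)⟩

theorem kLe.supp_subset (h : kLe x y) : supp x ⊆ supp y := fun a ha => by
  rw [mem_supp] at ha ⊢
  rwa [h a ha]

theorem kLe.eq_of_card_supp_le (h : kLe x y) (hcard : (supp y).card ≤ (supp x).card) : y = x := by
  have hsupp : supp x = supp y := eq_of_subset_of_card_le h.supp_subset hcard
  funext a
  by_cases ha : x a = 0
  · have hya : a ∉ supp y := hsupp ▸ fun hax => mem_supp.mp hax ha
    rw [ha]
    exact not_ne_iff.mp (mt mem_supp.mpr hya)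
  · exact h a ha

variable [DecidableEq E]

theorem supp_update_of_ne_zero {a : E} {v : Fin (k + 1)} (hv : v ≠ 0) :
    supp (Function.update x a v) = insert a (supp x) := by
  ext b
  rcases eq_or_ne b a with rfl | hb
  · simp [mem_supp, hv]
  · simp [mem_supp, hb]

theorem supp_update_zero {a : E} :
    supp (Function.update x a 0) = (supp x).erase a := by
  ext b
  rcases eq_or_ne b a with rfl | hb
  · simp [mem_supp]
  · simp [mem_supp, hb]

theorem kLe.update_update_zero (h : kLe x y) {b : E} (hb : b ∉ supp x) (a : E) (v : Fin (k + 1)) :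
    kLe (Function.update x a v) (Function.update (Function.update y b 0) a v) := by
  intro c hc
  rcases eq_or_ne c a with rfl | hca
  · simp
  simp only [Function.update_of_ne hca] at hc ⊢
  have hcb : c ≠ b := by
    rintro rfl
    exact hb (mem_supp.mpr hc)
  rw [Function.update_of_ne hcb]
  exact h c hc

theorem IsMatroid.exists_exchange_step {F : Finset E → Prop} (hF : IsMatroid F) (hxy : kLe x y)
    (hy : IsBasis F (supp y)) {a : E} {v : Fin (k + 1)} (ha : a ∉ supp x)
    (hI : F (insert a (supp x))) (hv : v ≠ 0) :
    ∃ y', (∃ b ∈ supp y \ supp x, y' = Function.update (Function.update y b 0) a v) ∧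
      kLe (Function.update x a v) y' ∧ IsBasis F (supp y') := by
  obtain ⟨b, hb, hbasis⟩ := hF.exists_isBasis_insert_erase hy hxy.supp_subset ha hI
  refine ⟨_, ⟨b, hb, rfl⟩, hxy.update_update_zero (mem_sdiff.mp hb).2 a v, ?_⟩
  rwa [supp_update_of_ne_zero hv, supp_update_zero]

end Support

theorem exists_seq_of_forall_exists {α : Type*} (P : ℕ → α → Prop) (R : ℕ → α → α → Prop)
    (n : ℕ) (a : α) (h0 : P 0 a) (hstep : ∀ j < n, ∀ x, P j x → ∃ y, R j x y ∧ P (j + 1) y) :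
    ∃ seq : ℕ → α, seq 0 = a ∧ (∀ j ≤ n, P j (seq j)) ∧ ∀ j < n, R j (seq j) (seq (j + 1)) := by
  choose! g hg using hstep
  let seq : ℕ → α := fun j => Nat.rec (motive := fun _ => α) a g j
  have hP : ∀ j ≤ n, P j (seq j) := by
    intro j hj
    induction j with
    | zero => exact h0
    | succ j ih => exact (hg j (by omega) _ (ih (by omega))).2
  exact ⟨seq, rfl, hP, fun j hj => (hg j hj _ (hP j hj.le)).1⟩

theorem exists_interpolating_sequence_general
    {E : Type*} [Fintype E] [DecidableEq E]
    (F : Finset E → Prop) (hF : IsMatroid F) (M : ℕ)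
    (hM : ∀ B : Finset E, IsBasis F B → B.card = M)
    (k : ℕ)
    (s : ℕ → E → Fin (k + 1)) (e : ℕ → E) (i : ℕ → Fin (k + 1))
    (hs0 : s 0 = fun _ => 0)
    (hstep : ∀ j < M,
      e (j + 1) ∉ supp (s j) ∧
      F (insert (e (j + 1)) (supp (s j))) ∧
      i (j + 1) ≠ 0 ∧
      s (j + 1) = Function.update (s j) (e (j + 1)) (i (j + 1)))
    (o : E → Fin (k + 1)) (ho : IsBasis F (supp o)) :
    ∃ os : ℕ → E → Fin (k + 1),
      os 0 = o ∧
      os M = s M ∧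
      (∀ j < M, kLt (s j) (os j)) ∧
      (∀ j ≤ M, IsBasis F (supp (os j))) ∧
      (∀ j < M, ∃ oj ∈ supp (os j) \ supp (s j),
        os (j + 1) =
          Function.update (Function.update (os j) oj 0) (e (j + 1)) (i (j + 1))) := by
  have hcard_s : ∀ j ≤ M, (supp (s j)).card = j := by
    intro j hj
    induction j with
    | zero => simp [hs0, supp]
    | succ j ih =>
      obtain ⟨he, -, hi, hs⟩ := hstep j (by omega)
      rw [hs, supp_update_of_ne_zero hi, card_insert_of_notMem he, ih (by omega)]
  obtain ⟨os, hos0, hos, hexch⟩ := exists_seq_of_forall_exists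
    (fun j y => kLe (s j) y ∧ IsBasis F (supp y)) _ M o ⟨by simp [hs0, kLe], ho⟩
    fun j hj y ⟨hle, hy⟩ => by
      obtain ⟨he, hI, hi, hs⟩ := hstep j hj
      rw [hs]
      exact hF.exists_exchange_step hle hy he hI hi
  have hcard_os : ∀ j ≤ M, (supp (os j)).card = M := fun j hj => hM _ (hos j hj).2
  refine ⟨os, hos0, ?_, fun j hj => ?_, fun j hj => (hos j hj).2, hexch⟩
  · exact (hos M le_rfl).1.eq_of_card_supp_le (by rw [hcard_os M le_rfl, hcard_s M le_rfl])
  · exact (hos j hj.le).1.kLt_of_card_supp_lt (by rw [hcard_os j hj.le, hcard_s j hj.le]; exact hj)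

/-- Construction of the interpolating sequence `o⁽⁰⁾ = o, o⁽¹⁾, …, o⁽ᴹ⁾ = s⁽ᴹ⁾`
satisfying properties (1) and (2). -/
theorem exists_interpolating_sequence
    {E : Type*} [Fintype E] [DecidableEq E]
    (F : Finset E → Prop) (hF : IsMatroid F) (M : ℕ)
    (hM : ∀ B : Finset E, IsBasis F B → B.card = M)
    (k : ℕ) (hk : 1 ≤ k)
    (f : (E → Fin (k + 1)) → ℝ)
    (hsub : KSubmodular f) (hmono : KMonotone f)
    (s : ℕ → E → Fin (k + 1)) (e : ℕ → E) (i : ℕ → Fin (k + 1))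
    (hs0 : s 0 = fun _ => 0)
    (hstep : ∀ j < M,
      e (j + 1) ∉ supp (s j) ∧
      F (insert (e (j + 1)) (supp (s j))) ∧
      i (j + 1) ≠ 0 ∧
      s (j + 1) = Function.update (s j) (e (j + 1)) (i (j + 1)))
    (o : E → Fin (k + 1)) (ho : IsBasis F (supp o)) :
    ∃ os : ℕ → E → Fin (k + 1),
      os 0 = o ∧
      os M = s M ∧
      (∀ j < M, kLt (s j) (os j)) ∧
      (∀ j ≤ M, IsBasis F (supp (os j))) ∧
      (∀ j < M, ∃ oj ∈ supp (os j) \ supp (s j),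
        os (j + 1) =
          Function.update (Function.update (os j) oj 0) (e (j + 1)) (i (j + 1))) :=
  exists_interpolating_sequence_general F hF M hM k s e i hs0 hstep o ho
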